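/- arXiv:2107.14675 — 3 statements merged into one kernel-verified Lean document; each statement's English description precedes it below -/
import Mathlib

section
/- Let a = (ABC, A, C, f^[α], g^[β]) be a regular overlap ambiguity (so A, C are nonempty words, lm(f) = AB, lm(g) = BC, and s(αC) ≠ s(Aβ)). Then the signature of the S-polynomial spol(a) = (1/lc(f)) f^[α] C − (1/lc(g)) A g^[β] strictly exceeds both s(α) and s(β): s(spol(a)) ≻ max{s(α), s(β)}. -/
open Finsupp

/-- The free algebra `K⟨X⟩`, realized as the monoid algebra of the free monoid. -/
abbrev FreeAlg (K X : Type*) [Field K] := MonoidAlgebra K (FreeMonoid X)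

/-- Module monomials `a εᵢ b` of the free bimodule of rank `r`. -/
structure MonMod (X : Type*) (r : ℕ) where
  left : FreeMonoid X
  idx : Fin r
  right : FreeMonoid X

/-- The free bimodule `Σ = (K⟨X⟩ ⊗ K⟨X⟩)^r`, realized as the span of module monomials. -/
abbrev FreeBimod (K X : Type*) [Field K] (r : ℕ) := MonMod X r →₀ K

/-- Two-sided action of a pair of words on a module monomial: `a·(c εᵢ d)·b = (ac) εᵢ (db)`. -/
def act {X : Type*} {r : ℕ} (a b : FreeMonoid X) (μ : MonMod X r) : MonMod X r :=
  ⟨a * μ.left, μ.idx, μ.right * b⟩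

/-- The monomial `w` as an element of the free algebra. -/
noncomputable def mon (K : Type*) [Field K] {X : Type*} (w : FreeMonoid X) : FreeAlg K X :=
  MonoidAlgebra.of K (FreeMonoid X) w

/-- The evaluation homomorphism `Σ → K⟨X⟩`, `εᵢ ↦ fᵢ`. -/
noncomputable def evalS {K X : Type*} [Field K] {r : ℕ} (F : Fin r → FreeAlg K X)
    (α : FreeBimod K X r) : FreeAlg K X :=
  α.sum fun μ c => c • (mon K μ.left * F μ.idx * mon K μ.right)

section Orders

variable {K X : Type*} [Field K] [LinearOrder (FreeMonoid X)] {r : ℕ}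
  [LinearOrder (MonMod X r)]

/-- The signature of a module element: the largest module monomial of its support
(`⊥` for the zero element). -/
noncomputable def sigW (α : FreeBimod K X r) : WithBot (MonMod X r) := α.support.max

/-- The leading monomial of a nonzero polynomial (junk value `1` for `0`). -/
noncomputable def lmon (p : FreeAlg K X) : FreeMonoid X :=
  if h : p.coeff.support.Nonempty then p.coeff.support.max' h else 1

/-- The leading coefficient. -/
noncomputable def lcoeff (p : FreeAlg K X) : K := p.coeff (lmon p)

/-- The leading term. -/
noncomputable def lterm (p : FreeAlg K X) : FreeAlg K X :=
  MonoidAlgebra.single (lmon p) (lcoeff p)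

/-- `f^[α]` is top s-reducible by the set `G^[Σ]`. -/
def TopSRed (G : Set (FreeAlg K X × FreeBimod K X r)) (f : FreeAlg K X)
    (α : FreeBimod K X r) : Prop :=
  ∃ g γ, (g, γ) ∈ G ∧ g ≠ 0 ∧ ∃ a b : FreeMonoid X,
    a * lmon g * b = lmon f ∧ WithBot.map (act a b) (sigW γ) ≤ sigW α

/-- `f^[α]` is singular top s-reducible by `G^[Σ]`. -/
def SingTopSRed (G : Set (FreeAlg K X × FreeBimod K X r)) (f : FreeAlg K X)
    (α : FreeBimod K X r) : Prop :=
  f ≠ 0 ∧ ∃ g γ, (g, γ) ∈ G ∧ g ≠ 0 ∧ ∃ a b : FreeMonoid X,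
    a * lmon g * b = lmon f ∧ WithBot.map (act a b) (sigW γ) = sigW α

/-- `f^[α]` admits a regular s-reduction by `G^[Σ]`. -/
def RegSRedible (G : Set (FreeAlg K X × FreeBimod K X r)) (f : FreeAlg K X)
    (α : FreeBimod K X r) : Prop :=
  ∃ g γ, (g, γ) ∈ G ∧ g ≠ 0 ∧ ∃ a b : FreeMonoid X,
    a * lmon g * b ∈ f.coeff.support ∧ WithBot.map (act a b) (sigW γ) < sigW α

/-- `f^[α]` admits a regular *top* s-reduction by `G^[Σ]`. -/
def RegTopSRedible (G : Set (FreeAlg K X × FreeBimod K X r)) (f : FreeAlg K X)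
    (α : FreeBimod K X r) : Prop :=
  f ≠ 0 ∧ ∃ g γ, (g, γ) ∈ G ∧ g ≠ 0 ∧ ∃ a b : FreeMonoid X,
    a * lmon g * b = lmon f ∧ WithBot.map (act a b) (sigW γ) < sigW α

/-- Result of one s-reduction step of `f^[α]` by `a g^[γ] b`. -/
noncomputable def sredResult (f : FreeAlg K X) (α : FreeBimod K X r)
    (g : FreeAlg K X) (γ : FreeBimod K X r) (a b : FreeMonoid X) :
    FreeAlg K X × FreeBimod K X r :=
  (f - (f.coeff (a * lmon g * b) * (lcoeff g)⁻¹) • (mon K a * g * mon K b),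
   α - (f.coeff (a * lmon g * b) * (lcoeff g)⁻¹) • Finsupp.mapDomain (act a b) γ)

/-- One s-reduction step by `G^[Σ]`. -/
def SRedStep (G : Set (FreeAlg K X × FreeBimod K X r))
    (p q : FreeAlg K X × FreeBimod K X r) : Prop :=
  ∃ g γ, (g, γ) ∈ G ∧ g ≠ 0 ∧ ∃ a b : FreeMonoid X,
    a * lmon g * b ∈ p.1.coeff.support ∧ WithBot.map (act a b) (sigW γ) ≤ sigW p.2 ∧
    q = sredResult p.1 p.2 g γ a b

/-- One *regular* s-reduction step by `G^[Σ]`. -/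
def RegSRedStep (G : Set (FreeAlg K X × FreeBimod K X r))
    (p q : FreeAlg K X × FreeBimod K X r) : Prop :=
  ∃ g γ, (g, γ) ∈ G ∧ g ≠ 0 ∧ ∃ a b : FreeMonoid X,
    a * lmon g * b ∈ p.1.coeff.support ∧ WithBot.map (act a b) (sigW γ) < sigW p.2 ∧
    q = sredResult p.1 p.2 g γ a b

/-- `p` s-reduces to zero by `G^[Σ]`. -/
def SRedToZero (G : Set (FreeAlg K X × FreeBimod K X r))
    (p : FreeAlg K X × FreeBimod K X r) : Prop :=
  ∃ σ : FreeBimod K X r, Relation.ReflTransGen (SRedStep G) p (0, σ)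

/-- `p` regular s-reduces to zero by `G^[Σ]`. -/
def RegSRedToZero (G : Set (FreeAlg K X × FreeBimod K X r))
    (p : FreeAlg K X × FreeBimod K X r) : Prop :=
  ∃ σ : FreeBimod K X r, Relation.ReflTransGen (RegSRedStep G) p (0, σ)

/-- `G^[Σ] ⊆ I^[Σ]`: labelled polynomials with nonzero polynomial part. -/
def InLab (F : Fin r → FreeAlg K X) (G : Set (FreeAlg K X × FreeBimod K X r)) : Prop :=
  ∀ p ∈ G, p.1 = evalS F p.2 ∧ p.1 ≠ 0

/-- `G^[Σ]` is a labelled Gröbner basis of `I^[Σ]`. -/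
def LabGB (F : Fin r → FreeAlg K X) (G : Set (FreeAlg K X × FreeBimod K X r)) : Prop :=
  InLab F G ∧ ∀ (f : FreeAlg K X) (α : FreeBimod K X r), f = evalS F α → SRedToZero G (f, α)

/-- `G^[Σ]` is a labelled Gröbner basis of `I^[Σ]` up to signature `σ`. -/
def LabGBUpTo (F : Fin r → FreeAlg K X) (G : Set (FreeAlg K X × FreeBimod K X r))
    (σ : MonMod X r) : Prop :=
  InLab F G ∧ ∀ (f : FreeAlg K X) (α : FreeBimod K X r), f = evalS F α →
    sigW α < (σ : WithBot (MonMod X r)) → SRedToZero G (f, α)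

/-- `G^[Σ]` is a *minimal* labelled Gröbner basis of `I^[Σ]`. -/
def MinLabGB (F : Fin r → FreeAlg K X) (G : Set (FreeAlg K X × FreeBimod K X r)) : Prop :=
  LabGB F G ∧ ∀ p ∈ G, ¬ TopSRed (G \ {p}) p.1 p.2

end Orders

/-! A strictly monotone self-map of a well-order is inflationary, so the compatible well-order on
module monomials satisfies `μ ≺ a μ b` as soon as `a μ b ≠ μ`. Hence `s(αC) ≻ s(α)` and
`s(Aβ) ≻ s(β)`, and since the two signatures `s(αC) ≠ s(Aβ)` cannot cancel, the signature of the
S-polynomial is their maximum. -/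

section Action

variable {X : Type*} {r : ℕ}

theorem act_injective (a b : FreeMonoid X) : Function.Injective (act (r := r) a b) := by
  rintro ⟨l₁, i₁, r₁⟩ ⟨l₂, i₂, r₂⟩ h
  simp only [act, MonMod.mk.injEq] at h ⊢
  exact ⟨mul_left_cancel h.1, h.2.1, mul_right_cancel h.2.2⟩

theorem act_eq_self_iff {a b : FreeMonoid X} {μ : MonMod X r} :
    act a b μ = μ ↔ a = 1 ∧ b = 1 := by
  obtain ⟨l, i, rt⟩ := μ
  simp only [act, MonMod.mk.injEq, mul_eq_right, mul_eq_left, true_and]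

theorem lt_act [LinearOrder (MonMod X r)] [WellFoundedLT (MonMod X r)] {a b : FreeMonoid X}
    (hmono : Monotone (act (r := r) a b)) (hab : a ≠ 1 ∨ b ≠ 1) (μ : MonMod X r) :
    μ < act a b μ :=
  ((hmono.strictMono_of_injective (act_injective a b)).le_apply).lt_of_ne' <| by
    rw [Ne, act_eq_self_iff, not_and_or]
    exact hab

end Action

section Signature

variable {K X : Type*} [Field K] {r : ℕ} [LinearOrder (MonMod X r)]

theorem sigW_eq_bot_iff {α : FreeBimod K X r} : sigW α = ⊥ ↔ α = 0 := by
  rw [sigW, Finset.max_eq_bot, Finsupp.support_eq_empty]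

theorem sigW_smul {c : K} (hc : c ≠ 0) (α : FreeBimod K X r) : sigW (c • α) = sigW α := by
  rw [sigW, sigW, Finsupp.support_smul_eq hc]

theorem sigW_neg (α : FreeBimod K X r) : sigW (-α) = sigW α := by
  rw [sigW, sigW, Finsupp.support_neg]

theorem sigW_mapDomain {f : MonMod X r → MonMod X r} (hf : StrictMono f)
    (α : FreeBimod K X r) : sigW (Finsupp.mapDomain f α) = (sigW α).map f := by
  classical
  rw [sigW, sigW, Finsupp.mapDomain_support_of_injective hf.injective]
  rcases α.support.eq_empty_or_nonempty with h | h
  · simp [h]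
  · rw [← Finset.coe_max' h, ← Finset.coe_max' (h.image f), Finset.max'_image hf.monotone]
    rfl

theorem sigW_add_of_lt {p q : FreeBimod K X r} (h : sigW q < sigW p) :
    sigW (p + q) = sigW p := by
  classical
  obtain ⟨μ, hμ⟩ := WithBot.ne_bot_iff_exists.mp h.ne_bot
  have hqμ : q μ = 0 := by
    by_contra hq
    exact (Finset.le_max (Finsupp.mem_support_iff.mpr hq)).not_gt (hμ ▸ h)
  refine le_antisymm (Finset.max_le fun ν hν => ?_) (hμ ▸ Finset.le_max ?_)
  · rcases Finset.mem_union.mp (Finsupp.support_add hν) with hp | hq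
    · exact Finset.le_max hp
    · exact (Finset.le_max hq).trans h.le
  · rw [Finsupp.mem_support_iff, Finsupp.add_apply, hqμ, add_zero, ← Finsupp.mem_support_iff]
    exact Finset.mem_of_max hμ.symm

theorem sigW_sub_of_ne {p q : FreeBimod K X r} (h : sigW p ≠ sigW q) :
    sigW (p - q) = max (sigW p) (sigW q) := by
  rcases h.lt_or_gt with hlt | hlt
  · rw [max_eq_right hlt.le, sub_eq_neg_add, sigW_add_of_lt (by rwa [sigW_neg]), sigW_neg]
  · rw [max_eq_left hlt.le, sub_eq_add_neg, sigW_add_of_lt (by rwa [sigW_neg])]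

theorem sigW_smul_mapDomain_act {a b : FreeMonoid X} (hmono : Monotone (act (r := r) a b))
    {c : K} (hc : c ≠ 0) (α : FreeBimod K X r) :
    sigW (c • Finsupp.mapDomain (act a b) α) = (sigW α).map (act a b) := by
  rw [sigW_smul hc, sigW_mapDomain (hmono.strictMono_of_injective (act_injective a b))]

theorem sigW_lt_sigW_smul_mapDomain_act [WellFoundedLT (MonMod X r)] {a b : FreeMonoid X}
    (hmono : Monotone (act (r := r) a b)) (hab : a ≠ 1 ∨ b ≠ 1) {c : K} (hc : c ≠ 0)
    {α : FreeBimod K X r} (hα : α ≠ 0) :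
    sigW α < sigW (c • Finsupp.mapDomain (act a b) α) := by
  obtain ⟨μ, hμ⟩ := WithBot.ne_bot_iff_exists.mp (sigW_eq_bot_iff.not.mpr hα)
  rw [sigW_smul_mapDomain_act hmono hc, ← hμ]
  exact WithBot.coe_lt_coe.mpr (lt_act hmono hab μ)

end Signature

theorem lcoeff_ne_zero {K X : Type*} [Field K] [LinearOrder (FreeMonoid X)] {p : FreeAlg K X}
    (hp : p ≠ 0) : lcoeff p ≠ 0 := by
  have hne : p.coeff.support.Nonempty :=
    Finsupp.support_nonempty_iff.mpr (mt MonoidAlgebra.coeff_eq_zero.mp hp)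
  rw [lcoeff, ← Finsupp.mem_support_iff, lmon, dif_pos hne]
  exact Finset.max'_mem _ hne

theorem sig_regular_spol_gt_general {K X : Type*} [Field K] {r : ℕ}
    [LinearOrder (FreeMonoid X)]
    [LinearOrder (MonMod X r)] [WellFoundedLT (MonMod X r)]
    (hmod : ∀ (a b : FreeMonoid X) (μ ν : MonMod X r), μ ≤ ν → act a b μ ≤ act a b ν)
    (F : Fin r → FreeAlg K X)
    (f g : FreeAlg K X) (α β : FreeBimod K X r)
    (hf : f = evalS F α) (hg : g = evalS F β) (hf0 : f ≠ 0) (hg0 : g ≠ 0)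
    (A C : FreeMonoid X) (hA : A ≠ 1) (hC : C ≠ 1)
    (hreg : WithBot.map (act 1 C) (sigW α) ≠ WithBot.map (act A 1) (sigW β)) :
    max (sigW α) (sigW β) <
      sigW ((lcoeff f)⁻¹ • Finsupp.mapDomain (act 1 C) α -
            (lcoeff g)⁻¹ • Finsupp.mapDomain (act A 1) β) := by
  have hα : α ≠ 0 := by rintro rfl; exact hf0 (by simp [hf, evalS])
  have hβ : β ≠ 0 := by rintro rfl; exact hg0 (by simp [hg, evalS])
  have hmonoC : Monotone (act (r := r) 1 C) := hmod 1 C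
  have hmonoA : Monotone (act (r := r) A 1) := hmod A 1
  have hcf := inv_ne_zero (lcoeff_ne_zero hf0)
  have hcg := inv_ne_zero (lcoeff_ne_zero hg0)
  rw [sigW_sub_of_ne ?ne]
  case ne => rwa [sigW_smul_mapDomain_act hmonoC hcf, sigW_smul_mapDomain_act hmonoA hcg]
  exact max_lt_max (sigW_lt_sigW_smul_mapDomain_act hmonoC (.inr hC) hcf hα)
    (sigW_lt_sigW_smul_mapDomain_act hmonoA (.inl hA) hcg hβ)

/-- Let `(ABC, A, C, f^[α], g^[β])` be a regular overlap ambiguity (`A, B, C` nonempty,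
`lm(f) = AB`, `lm(g) = BC`, `s(αC) ≠ s(Aβ)`). Then the signature of the S-polynomial
`spol = (1/lc f) f^[α] C − (1/lc g) A g^[β]` strictly exceeds both `s(α)` and `s(β)`. -/
theorem sig_regular_spol_gt {K X : Type*} [Field K] {r : ℕ}
    [LinearOrder (FreeMonoid X)] [WellFoundedLT (FreeMonoid X)]
    [LinearOrder (MonMod X r)] [WellFoundedLT (MonMod X r)]
    (hmon : ∀ a b u v : FreeMonoid X, u ≤ v → a * u * b ≤ a * v * b)
    (hmod : ∀ (a b : FreeMonoid X) (μ ν : MonMod X r), μ ≤ ν → act a b μ ≤ act a b ν)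
    (hcomp : ∀ (u v : FreeMonoid X) (i : Fin r),
      (u ≤ v ↔ (⟨u, i, 1⟩ : MonMod X r) ≤ ⟨v, i, 1⟩) ∧
      (u ≤ v ↔ (⟨1, i, u⟩ : MonMod X r) ≤ ⟨1, i, v⟩))
    (F : Fin r → FreeAlg K X)
    (f g : FreeAlg K X) (α β : FreeBimod K X r)
    (hf : f = evalS F α) (hg : g = evalS F β) (hf0 : f ≠ 0) (hg0 : g ≠ 0)
    (A B C : FreeMonoid X) (hA : A ≠ 1) (hB : B ≠ 1) (hC : C ≠ 1)
    (hlf : lmon f = A * B) (hlg : lmon g = B * C)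
    (hreg : WithBot.map (act 1 C) (sigW α) ≠ WithBot.map (act A 1) (sigW β)) :
    max (sigW α) (sigW β) <
      sigW ((lcoeff f)⁻¹ • Finsupp.mapDomain (act 1 C) α -
            (lcoeff g)⁻¹ • Finsupp.mapDomain (act A 1) β) :=
  sig_regular_spol_gt_general hmod F f g α β hf hg hf0 hg0 A C hA hC hreg
end

section
/- If G^[Σ] is a minimal labelled Gröbner basis of I^[Σ] and H^[Σ] is any labelled Gröbner basis of I^[Σ], then for every g^[γ] ∈ G^[Σ] there exists h^[δ] ∈ H^[Σ] with lm(g) = lm(h) and s(γ) = s(δ). -/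
open Finsupp

/-!
An s-reduction of a nonzero `f^[α]` to zero must at some point cancel `lm(f)`; the steps before
that keep `lm(f)` and do not raise the signature, so a labelled Gröbner basis top s-reduces every
nonzero `f^[α] ∈ I^[Σ]`. Hence `H^[Σ]` top s-reduces `g^[γ] ∈ G^[Σ]` by some `h^[δ]`, and `G^[Σ]`
top s-reduces `h^[δ]` by some `g'^[γ']`. Top s-reducibility composes, so minimality forces
`g'^[γ'] = g^[γ]`. Then `lm(g)` and `lm(h)` divide each other, which in the free monoid makes all
multipliers trivial, so the leading monomials agree and the two signature inequalities become
equalities.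
-/

theorem FreeMonoid.eq_one_of_mul_mul_eq {X : Type*} {a b u : FreeMonoid X} (h : a * u * b = u) :
    a = 1 ∧ b = 1 := by
  have hlen := congrArg FreeMonoid.length h
  simp only [FreeMonoid.length_mul] at hlen
  exact ⟨FreeMonoid.length_eq_zero.mp (by omega), FreeMonoid.length_eq_zero.mp (by omega)⟩

section LeadingMonomial

variable {K X : Type*} [Field K]

theorem coeff_mon_mul_mul_mon (a b : FreeMonoid X) (g : FreeAlg K X) :
    (mon K a * g * mon K b).coeff = mapDomain (fun u => a * u * b) g.coeff := by
  rw [← MonoidAlgebra.ofCoeff_coeff g]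
  induction g.coeff using Finsupp.induction_linear with
  | zero => simp
  | add f g hf hg =>
    rw [MonoidAlgebra.ofCoeff_add, mul_add, add_mul, MonoidAlgebra.coeff_add, hf, hg,
      mapDomain_add]
  | single u c =>
    simp only [mon, MonoidAlgebra.of_apply, mapDomain_single, MonoidAlgebra.ofCoeff_single]
    rw [MonoidAlgebra.single_mul_single, MonoidAlgebra.single_mul_single, one_mul, mul_one]
    rfl

variable [LinearOrder (FreeMonoid X)]

theorem lmon_mem_support {p : FreeAlg K X} (hp : p ≠ 0) : lmon p ∈ p.coeff.support := by
  rw [lmon, dif_pos (support_nonempty_iff.mpr (by simpa using hp))]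
  exact Finset.max'_mem _ _

theorem le_lmon {p : FreeAlg K X} {w : FreeMonoid X} (hw : w ∈ p.coeff.support) :
    w ≤ lmon p := by
  rw [lmon, dif_pos ⟨w, hw⟩]
  exact Finset.le_max' _ _ hw

theorem lmon_eq_of_forall_le {p : FreeAlg K X} {L : FreeMonoid X} (hL : L ∈ p.coeff.support)
    (h : ∀ w ∈ p.coeff.support, w ≤ L) : lmon p = L := by
  refine le_antisymm (h _ (lmon_mem_support ?_)) (le_lmon hL)
  rintro rfl
  simp at hL

theorem sub_ne_zero_and_lmon_sub_of_forall_lt {f q : FreeAlg K X} (hf : f ≠ 0)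
    (hq : ∀ w ∈ q.coeff.support, w < lmon f) : f - q ≠ 0 ∧ lmon (f - q) = lmon f := by
  classical
  have hqL : q.coeff (lmon f) = 0 := notMem_support_iff.mp fun h => lt_irrefl _ (hq _ h)
  have hL : lmon f ∈ (f - q).coeff.support := by
    rw [MonoidAlgebra.coeff_sub, mem_support_iff, Finsupp.sub_apply, hqL, sub_zero]
    exact mem_support_iff.mp (lmon_mem_support hf)
  refine ⟨fun h => by simp [h] at hL, lmon_eq_of_forall_le hL fun w hw => ?_⟩
  rw [MonoidAlgebra.coeff_sub] at hw
  rcases Finset.mem_union.mp (support_sub hw) with h | h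
  · exact le_lmon h
  · exact (hq w h).le

theorem le_of_mem_support_smul_mon_mul_mon
    (hmon : ∀ a b : FreeMonoid X, Monotone fun u => a * u * b)
    {c : K} {a b w : FreeMonoid X} {g : FreeAlg K X}
    (hw : w ∈ (c • (mon K a * g * mon K b)).coeff.support) : w ≤ a * lmon g * b := by
  classical
  have hw' : w ∈ (mapDomain (fun u => a * u * b) g.coeff).support := by
    rw [← coeff_mon_mul_mul_mon]
    exact support_smul hw
  obtain ⟨u, hu, rfl⟩ := Finset.mem_image.mp (mapDomain_support hw')
  exact hmon a b (le_lmon hu)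

end LeadingMonomial

section Signature

variable {K X : Type*} [Field K] {r : ℕ}

theorem act_act (a b c d : FreeMonoid X) (μ : MonMod X r) :
    act a b (act c d μ) = act (a * c) (d * b) μ := by
  simp [act, mul_assoc]

theorem act_one_one : act (1 : FreeMonoid X) 1 = (id : MonMod X r → MonMod X r) := by
  funext μ
  simp [act]

variable [LinearOrder (MonMod X r)]

theorem sigW_sub_le (x y : FreeBimod K X r) : sigW (x - y) ≤ sigW x ⊔ sigW y := by
  classical
  exact (Finset.max_mono support_sub).trans_eq Finset.max_union

theorem sigW_smul_le (c : K) (y : FreeBimod K X r) : sigW (c • y) ≤ sigW y :=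
  Finset.max_mono support_smul

theorem sigW_mapDomain_le {f : MonMod X r → MonMod X r} (hf : Monotone f)
    (γ : FreeBimod K X r) : sigW (mapDomain f γ) ≤ WithBot.map f (sigW γ) := by
  classical
  refine Finset.max_le fun μ hμ => ?_
  obtain ⟨ν, hν, rfl⟩ := Finset.mem_image.mp (mapDomain_support hμ)
  rw [sigW, ← Finset.coe_max' ⟨ν, hν⟩, WithBot.map_coe, WithBot.coe_le_coe]
  exact hf (Finset.le_max' _ _ hν)

variable [LinearOrder (FreeMonoid X)] in
theorem sigW_sredResult_le (hmod : ∀ a b : FreeMonoid X, Monotone (act (r := r) a b))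
    {f g : FreeAlg K X} {α γ : FreeBimod K X r} {a b : FreeMonoid X}
    (h : WithBot.map (act a b) (sigW γ) ≤ sigW α) :
    sigW (sredResult f α g γ a b).2 ≤ sigW α :=
  (sigW_sub_le _ _).trans <| sup_le le_rfl <|
    (sigW_smul_le _ _).trans <| (sigW_mapDomain_le (hmod a b) γ).trans h

end Signature

section TopReduction

variable {K X : Type*} [Field K] {r : ℕ} [LinearOrder (FreeMonoid X)] [LinearOrder (MonMod X r)]

def TopSDivides (p q : FreeAlg K X × FreeBimod K X r) : Prop :=
  ∃ a b : FreeMonoid X, a * lmon p.1 * b = lmon q.1 ∧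
    WithBot.map (act a b) (sigW p.2) ≤ sigW q.2

theorem topSRed_iff {G : Set (FreeAlg K X × FreeBimod K X r)} {f : FreeAlg K X}
    {α : FreeBimod K X r} : TopSRed G f α ↔ ∃ q ∈ G, q.1 ≠ 0 ∧ TopSDivides q (f, α) :=
  ⟨fun ⟨g, γ, hG, hg, hdiv⟩ => ⟨(g, γ), hG, hg, hdiv⟩,
    fun ⟨⟨g, γ⟩, hG, hg, hdiv⟩ => ⟨g, γ, hG, hg, hdiv⟩⟩

theorem TopSDivides.trans (hmod : ∀ a b : FreeMonoid X, Monotone (act (r := r) a b))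
    {p q s : FreeAlg K X × FreeBimod K X r} (hpq : TopSDivides p q) (hqs : TopSDivides q s) :
    TopSDivides p s := by
  obtain ⟨a, b, hlm, hsig⟩ := hpq
  obtain ⟨c, d, hlm', hsig'⟩ := hqs
  refine ⟨c * a, b * d, by rw [← hlm', ← hlm]; simp only [mul_assoc], ?_⟩
  calc WithBot.map (act (c * a) (b * d)) (sigW p.2)
      = WithBot.map (act c d) (WithBot.map (act a b) (sigW p.2)) := by
        rw [WithBot.map_map]
        congr 1
        funext μ
        exact (act_act c d a b μ).symm
    _ ≤ WithBot.map (act c d) (sigW q.2) := WithBot.monotone_map_iff.mpr (hmod c d) hsig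
    _ ≤ sigW s.2 := hsig'

theorem TopSDivides.antisymm {p q : FreeAlg K X × FreeBimod K X r} (hpq : TopSDivides p q)
    (hqp : TopSDivides q p) : lmon p.1 = lmon q.1 ∧ sigW p.2 = sigW q.2 := by
  obtain ⟨a, b, hlm, hsig⟩ := hpq
  obtain ⟨c, d, hlm', hsig'⟩ := hqp
  have hcycle : c * a * lmon p.1 * (b * d) = lmon p.1 :=
    calc c * a * lmon p.1 * (b * d) = c * (a * lmon p.1 * b) * d := by simp only [mul_assoc]
      _ = lmon p.1 := by rw [hlm, hlm']
  obtain ⟨hca, hbd⟩ := FreeMonoid.eq_one_of_mul_mul_eq hcycle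
  obtain ⟨rfl, rfl⟩ := mul_eq_one'.mp hca
  obtain ⟨rfl, rfl⟩ := mul_eq_one'.mp hbd
  rw [act_one_one, WithBot.map_id] at hsig hsig'
  exact ⟨by simpa using hlm, le_antisymm hsig hsig'⟩

variable (hmon : ∀ a b : FreeMonoid X, Monotone fun u => a * u * b)
  (hmod : ∀ a b : FreeMonoid X, Monotone (act (r := r) a b))
include hmon hmod

/-- A reduction step below the leading monomial keeps the leading monomial and does not raise
the signature. -/
theorem SRedStep.topSRed_or_topSDivides {G : Set (FreeAlg K X × FreeBimod K X r)}
    {p c : FreeAlg K X × FreeBimod K X r} (hstep : SRedStep G p c) (hp : p.1 ≠ 0) :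
    TopSRed G p.1 p.2 ∨ c.1 ≠ 0 ∧ TopSDivides c p := by
  obtain ⟨g, γ, hgG, hg, a, b, hw, hsig, rfl⟩ := hstep
  rcases (le_lmon hw).eq_or_lt with htop | hlt
  · exact Or.inl ⟨g, γ, hgG, hg, a, b, htop, hsig⟩
  obtain ⟨hne, hlm⟩ := sub_ne_zero_and_lmon_sub_of_forall_lt hp fun w hw' =>
    (le_of_mem_support_smul_mon_mul_mon hmon hw').trans_lt hlt
  exact Or.inr ⟨hne, 1, 1, by rw [one_mul, mul_one]; exact hlm,
    by simpa [act_one_one] using sigW_sredResult_le hmod hsig⟩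

theorem TopSRed.of_reflTransGen {G : Set (FreeAlg K X × FreeBimod K X r)}
    {p : FreeAlg K X × FreeBimod K X r} {σ : FreeBimod K X r}
    (hred : Relation.ReflTransGen (SRedStep G) p (0, σ)) (hp : p.1 ≠ 0) :
    TopSRed G p.1 p.2 := by
  induction hred using Relation.ReflTransGen.head_induction_on with
  | refl => exact absurd rfl hp
  | head hstep _ ih =>
    rcases hstep.topSRed_or_topSDivides hmon hmod hp with htop | ⟨hc, hcp⟩
    · exact htop
    · obtain ⟨q, hqG, hq, hqc⟩ := topSRed_iff.mp (ih hc)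
      exact topSRed_iff.mpr ⟨q, hqG, hq, hqc.trans hmod hcp⟩

theorem LabGB.topSRed {F : Fin r → FreeAlg K X} {G : Set (FreeAlg K X × FreeBimod K X r)}
    (hG : LabGB F G) {f : FreeAlg K X} {α : FreeBimod K X r} (hf : f = evalS F α)
    (hf0 : f ≠ 0) : TopSRed G f α :=
  let ⟨_, hred⟩ := hG.2 f α hf
  TopSRed.of_reflTransGen hmon hmod hred hf0

end TopReduction

theorem minimal_labGB_matching_general {K X : Type*} [Field K] {r : ℕ}
    [LinearOrder (FreeMonoid X)]
    [LinearOrder (MonMod X r)]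
    (hmon : ∀ a b u v : FreeMonoid X, u ≤ v → a * u * b ≤ a * v * b)
    (hmod : ∀ (a b : FreeMonoid X) (μ ν : MonMod X r), μ ≤ ν → act a b μ ≤ act a b ν)
    (F : Fin r → FreeAlg K X) (G H : Set (FreeAlg K X × FreeBimod K X r))
    (hG : MinLabGB F G) (hH : LabGB F H) :
    ∀ p ∈ G, ∃ q ∈ H, lmon p.1 = lmon q.1 ∧ sigW p.2 = sigW q.2 := by
  have hmon' : ∀ a b : FreeMonoid X, Monotone fun u => a * u * b := fun a b _ _ => hmon a b _ _
  have hmod' : ∀ a b : FreeMonoid X, Monotone (act (r := r) a b) := fun a b _ _ => hmod a b _ _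
  intro p hp
  obtain ⟨hpev, hp0⟩ := hG.1.1 p hp
  obtain ⟨q, hqH, -, hqp⟩ := topSRed_iff.mp (hH.topSRed hmon' hmod' hpev hp0)
  obtain ⟨hqev, hq0⟩ := hH.1 q hqH
  obtain ⟨p', hp'G, hp'0, hp'q⟩ := topSRed_iff.mp (hG.1.topSRed hmon' hmod' hqev hq0)
  obtain rfl : p' = p := by
    by_contra hne
    exact hG.2 p hp (topSRed_iff.mpr ⟨p', ⟨hp'G, hne⟩, hp'0, hp'q.trans hmod' hqp⟩)
  exact ⟨q, hqH, hp'q.antisymm hqp⟩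

/-- If `G^[Σ]` is a minimal labelled Gröbner basis of `I^[Σ]` and `H^[Σ]` is any
labelled Gröbner basis of `I^[Σ]`, then for every `g^[γ] ∈ G^[Σ]` there exists
`h^[δ] ∈ H^[Σ]` with `lm(g) = lm(h)` and `s(γ) = s(δ)`. -/
theorem minimal_labGB_matching {K X : Type*} [Field K] {r : ℕ}
    [LinearOrder (FreeMonoid X)] [WellFoundedLT (FreeMonoid X)]
    [LinearOrder (MonMod X r)] [WellFoundedLT (MonMod X r)]
    (hmon : ∀ a b u v : FreeMonoid X, u ≤ v → a * u * b ≤ a * v * b)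
    (hmod : ∀ (a b : FreeMonoid X) (μ ν : MonMod X r), μ ≤ ν → act a b μ ≤ act a b ν)
    (hcomp : ∀ (u v : FreeMonoid X) (i : Fin r),
      (u ≤ v ↔ (⟨u, i, 1⟩ : MonMod X r) ≤ ⟨v, i, 1⟩) ∧
      (u ≤ v ↔ (⟨1, i, u⟩ : MonMod X r) ≤ ⟨1, i, v⟩))
    (F : Fin r → FreeAlg K X) (G H : Set (FreeAlg K X × FreeBimod K X r))
    (hG : MinLabGB F G) (hH : LabGB F H) :
    ∀ p ∈ G, ∃ q ∈ H, lmon p.1 = lmon q.1 ∧ sigW p.2 = sigW q.2 :=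
  minimal_labGB_matching_general hmon hmod F G H hG hH
end

section
/- In K⟨x,y⟩ with f₁ = xyx − xy, f₂ = yxy, f₃ = xyy − xxy, the polynomials g_n = y x^{n+2} y belong to the ideal I = (f₁,f₂,f₃) for all n ≥ 0. -/
/-!
The identity `y x^(n+2) y = (y x^(n+1) y) y - y x^n (x y y - x x y)` shows by induction
on `n`, starting from `f₂ = y x y`, that every `y x^(n+1) y` lies in any two-sided ideal
containing `f₂` and `f₃`.
-/

/-- The two-sided ideal of `A` generated by `S`: all finite sums `Σ aᵢ fᵢ bᵢ`
with `fᵢ ∈ S` and `aᵢ, bᵢ ∈ A`. -/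
def twoSidedSpan {A : Type*} [Ring A] (S : Set A) : Set A :=
  (AddSubgroup.closure {x : A | ∃ a f b, f ∈ S ∧ x = a * f * b} : Set A)

open scoped Pointwise in
theorem TwoSidedIdeal.coe_span_eq_twoSidedSpan {A : Type*} [Ring A] (S : Set A) :
    (span S : Set A) = twoSidedSpan S := by
  have h : Set.univ * S * Set.univ = {x : A | ∃ a f b, f ∈ S ∧ x = a * f * b} := by
    ext x
    simp only [Set.mem_mul, Set.mem_univ, true_and]
    constructor
    · rintro ⟨_, ⟨a, f, hf, rfl⟩, b, rfl⟩
      exact ⟨a, f, b, hf, rfl⟩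
    · rintro ⟨a, f, b, hf, rfl⟩
      exact ⟨_, ⟨a, f, hf, rfl⟩, b, rfl⟩
  ext z
  rw [SetLike.mem_coe, mem_span_iff_mem_addSubgroup_closure, h]
  rfl

theorem mul_pow_add_two_mul_eq {A : Type*} [Ring A] (x y : A) (n : ℕ) :
    y * x ^ (n + 2) * y = y * x ^ (n + 1) * y * y - y * x ^ n * (x * y * y - x * x * y) := by
  simp only [pow_succ]
  noncomm_ring

theorem TwoSidedIdeal.mul_pow_succ_mul_mem {A : Type*} [Ring A] (I : TwoSidedIdeal A)
    {x y : A} (h₂ : y * x * y ∈ I) (h₃ : x * y * y - x * x * y ∈ I) (n : ℕ) :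
    y * x ^ (n + 1) * y ∈ I := by
  induction n with
  | zero => simpa using h₂
  | succ n ih =>
    rw [mul_pow_add_two_mul_eq]
    exact I.sub_mem (I.mul_mem_right _ _ ih) (I.mul_mem_left _ _ h₃)

theorem gn_mem_ideal_general (K : Type*) [Field K]
    (x y f₁ f₂ f₃ : FreeAlgebra K (Fin 2))
    (hf₂ : f₂ = y * x * y) (hf₃ : f₃ = x * y * y - x * x * y) :
    ∀ n : ℕ, y * x ^ (n + 2) * y ∈ twoSidedSpan {f₁, f₂, f₃} := by
  intro n
  subst hf₂ hf₃
  rw [← TwoSidedIdeal.coe_span_eq_twoSidedSpan]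
  exact TwoSidedIdeal.mul_pow_succ_mul_mem _
    (TwoSidedIdeal.subset_span (by simp)) (TwoSidedIdeal.subset_span (by simp)) (n + 1)

/-- In `K⟨x,y⟩` with `f₁ = xyx − xy`, `f₂ = yxy`, `f₃ = xyy − xxy`, the polynomials
`gₙ = y x^{n+2} y` belong to the two-sided ideal `I = (f₁,f₂,f₃)` for all `n ≥ 0`. -/
theorem gn_mem_ideal (K : Type*) [Field K]
    (x y f₁ f₂ f₃ : FreeAlgebra K (Fin 2))
    (hx : x = FreeAlgebra.ι K 0) (hy : y = FreeAlgebra.ι K 1)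
    (hf₁ : f₁ = x * y * x - x * y) (hf₂ : f₂ = y * x * y) (hf₃ : f₃ = x * y * y - x * x * y) :
    ∀ n : ℕ, y * x ^ (n + 2) * y ∈ twoSidedSpan {f₁, f₂, f₃} :=
  gn_mem_ideal_general K x y f₁ f₂ f₃ hf₂ hf₃
end
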